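/- arXiv:2604.05108 — 7 statements merged into one kernel-verified Lean document; each statement's English description precedes it below -/
import Mathlib

section
/- Let n ≥ 2, let α be an invertible real n×n matrix, x̊ ∈ ℝ^n a center, y ≥ 0 an offset, B ∈ ℝ^{n×(n−1)} a matrix with linearly independent columns, and x' ∈ ℝ^n. Suppose Q ∈ ℝ^{n×(n−1)} has orthonormal columns (QᵀQ = I_{n−1}), R ∈ ℝ^{(n−1)×(n−1)} is invertible, and αB = QR. Define ż = R⁻¹Qᵀα(x̊ − x') and r = ‖α(x̊ − x')‖₂² − ‖Qᵀα(x̊ − x')‖₂². Then the intersection {x ∈ ℝ^n : ‖α(x − x̊)‖₂ ≤ y} ∩ {Bz + x' : z ∈ ℝ^{n−1}} equals {Bz + x' : z ∈ ℝ^{n−1}, ‖R(z − ż)‖₂ ≤ √(y² − r)} when y² ≥ r, and is empty when y² < r. -/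
open Matrix

/-- Euclidean norm of a vector in `ℝ^n`. -/
noncomputable def enorm2 {n : ℕ} (v : Fin n → ℝ) : ℝ := Real.sqrt (∑ i, v i ^ 2)

lemma enorm2_sq {n : ℕ} (v : Fin n → ℝ) : enorm2 v ^ 2 = ∑ i, v i ^ 2 := by
  rw [enorm2, Real.sq_sqrt]
  positivity

lemma enorm2_nonneg {n : ℕ} (v : Fin n → ℝ) : 0 ≤ enorm2 v := Real.sqrt_nonneg _

lemma my_le_of_sq_le_sq {a b : ℝ} (ha : 0 ≤ a) (hb : 0 ≤ b) (h : a ^ 2 ≤ b ^ 2) : a ≤ b := by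
  nlinarith

lemma sumSq_eq_dot {m : ℕ} (v : Fin m → ℝ) : (∑ i, v i ^ 2) = v ⬝ᵥ v := by
  simp [dotProduct, sq]

lemma key_dot {n m : ℕ} (Q : Matrix (Fin n) (Fin m) ℝ) (hQ : Qᵀ * Q = 1)
    (u : Fin m → ℝ) (v : Fin n → ℝ) :
    (Q.mulVec u - v) ⬝ᵥ (Q.mulVec u - v)
      = (u - Qᵀ.mulVec v) ⬝ᵥ (u - Qᵀ.mulVec v)
        + (v ⬝ᵥ v - (Qᵀ.mulVec v) ⬝ᵥ (Qᵀ.mulVec v)) := by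
  have h1 : (Q.mulVec u) ⬝ᵥ (Q.mulVec u) = u ⬝ᵥ u := by
    rw [dotProduct_mulVec, ← mulVec_transpose, mulVec_mulVec, hQ, one_mulVec]
  have h2 : (Q.mulVec u) ⬝ᵥ v = u ⬝ᵥ (Qᵀ.mulVec v) := by
    rw [dotProduct_mulVec, vecMul_transpose]
  have h3 : v ⬝ᵥ (Q.mulVec u) = (Qᵀ.mulVec v) ⬝ᵥ u := by
    rw [dotProduct_comm v, h2, dotProduct_comm]
  simp only [sub_dotProduct, dotProduct_sub, h1, h2, h3]
  ring

/-- **Slicing an ℓ₂-normotope with an affine subspace.**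
The ellipsoid `{x : ‖α(x − x̊)‖₂ ≤ y}` intersected with the affine subspace
`{Bz + x' : z}` is the image of a lower-dimensional ellipsoid when `y² ≥ r`,
and is empty when `y² < r`. -/
theorem slicing_ellipsoid {n : ℕ} (hn : 2 ≤ n)
    (α : Matrix (Fin n) (Fin n) ℝ) (hα : IsUnit α)
    (xc : Fin n → ℝ) (y : ℝ) (hy : 0 ≤ y)
    (B : Matrix (Fin n) (Fin (n - 1)) ℝ)
    (hB : LinearIndependent ℝ (fun j : Fin (n - 1) => Bᵀ j))
    (x' : Fin n → ℝ)
    (Q : Matrix (Fin n) (Fin (n - 1)) ℝ) (hQ : Qᵀ * Q = 1)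
    (R : Matrix (Fin (n - 1)) (Fin (n - 1)) ℝ) (hR : IsUnit R)
    (hQR : α * B = Q * R)
    (zc : Fin (n - 1) → ℝ)
    (hzc : zc = R⁻¹.mulVec (Qᵀ.mulVec (α.mulVec (xc - x'))))
    (r : ℝ)
    (hr : r = enorm2 (α.mulVec (xc - x')) ^ 2
        - enorm2 (Qᵀ.mulVec (α.mulVec (xc - x'))) ^ 2) :
    (r ≤ y ^ 2 →
      {x : Fin n → ℝ | enorm2 (α.mulVec (x - xc)) ≤ y} ∩
          {w : Fin n → ℝ | ∃ z : Fin (n - 1) → ℝ, w = B.mulVec z + x'} =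
        {w : Fin n → ℝ | ∃ z : Fin (n - 1) → ℝ, w = B.mulVec z + x' ∧
          enorm2 (R.mulVec (z - zc)) ≤ Real.sqrt (y ^ 2 - r)}) ∧
    (y ^ 2 < r →
      {x : Fin n → ℝ | enorm2 (α.mulVec (x - xc)) ≤ y} ∩
          {w : Fin n → ℝ | ∃ z : Fin (n - 1) → ℝ, w = B.mulVec z + x'} = ∅) := by
  have hRdet : IsUnit R.det := (Matrix.isUnit_iff_isUnit_det R).mp hR
  set v : Fin n → ℝ := α.mulVec (xc - x') with hv
  have hRzc : R.mulVec zc = Qᵀ.mulVec v := by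
    rw [hzc, Matrix.mulVec_mulVec, Matrix.mul_nonsing_inv R hRdet, Matrix.one_mulVec]
  -- the key identity on squared norms
  have keyS : ∀ z : Fin (n - 1) → ℝ,
      enorm2 (α.mulVec (B.mulVec z + x' - xc)) ^ 2
        = enorm2 (R.mulVec (z - zc)) ^ 2 + r := by
    intro z
    have hx : α.mulVec (B.mulVec z + x' - xc) = Q.mulVec (R.mulVec z) - v := by
      have h0 : B.mulVec z + x' - xc = B.mulVec z - (xc - x') := by
        funext i; simp; ring
      rw [h0, Matrix.mulVec_sub, Matrix.mulVec_mulVec, hQR, ← Matrix.mulVec_mulVec, hv]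
    have hRz : R.mulVec (z - zc) = R.mulVec z - Qᵀ.mulVec v := by
      rw [Matrix.mulVec_sub, hRzc]
    rw [hx, hRz, hr, enorm2_sq, enorm2_sq, enorm2_sq, enorm2_sq,
      sumSq_eq_dot, sumSq_eq_dot, sumSq_eq_dot, sumSq_eq_dot]
    exact key_dot Q hQ (R.mulVec z) v
  have hnn : ∀ {m : ℕ} (w : Fin m → ℝ), 0 ≤ ∑ i, w i ^ 2 := fun w => by positivity
  constructor
  · intro hyr
    ext x
    simp only [Set.mem_inter_iff, Set.mem_setOf_eq]
    constructor
    · rintro ⟨h1, z, rfl⟩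
      refine ⟨z, rfl, ?_⟩
      have h1' : enorm2 (α.mulVec (B.mulVec z + x' - xc)) ^ 2 ≤ y ^ 2 :=
        pow_le_pow_left₀ (enorm2_nonneg _) h1 2
      rw [keyS z] at h1'
      exact Real.le_sqrt_of_sq_le (by linarith)
    · rintro ⟨z, rfl, h2⟩
      refine ⟨?_, z, rfl⟩
      have h2' : enorm2 (R.mulVec (z - zc)) ^ 2 ≤ y ^ 2 - r := by
        have := pow_le_pow_left₀ (enorm2_nonneg _) h2 2
        rwa [Real.sq_sqrt (by linarith)] at this
      exact my_le_of_sq_le_sq (enorm2_nonneg _) hy (by rw [keyS z]; linarith)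
  · intro hyr
    ext x
    simp only [Set.mem_inter_iff, Set.mem_setOf_eq, Set.mem_empty_iff_false, iff_false]
    rintro ⟨h1, z, rfl⟩
    have h1' : enorm2 (α.mulVec (B.mulVec z + x' - xc)) ^ 2 ≤ y ^ 2 :=
      pow_le_pow_left₀ (enorm2_nonneg _) h1 2
    rw [keyS z] at h1'
    nlinarith [enorm2_nonneg (R.mulVec (z - zc))]
end

section
/- Let 0 ≤ T̲ < T̄ be real numbers and let g : ℝ → ℝ be differentiable on [0, T̄]. Suppose: (i) g(T̲) > 0; (ii) g(T̄) < 0; (iii) for every t ∈ [0, T̲] with g(t) = 0, g'(t) > 0; (iv) for every t ∈ [T̲, T̄] with g(t) = 0, g'(t) < 0. Then the set Z = {t ∈ [0, T̄] : g(t) = 0 and g'(t) < 0} is nonempty, and its infimum t* satisfies t* ∈ [T̲, T̄], g(t*) = 0, and g'(t*) < 0. -/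
/-- **Existence of a transversal downward crossing.**
If `g(T̲) > 0`, `g(T̄) < 0`, every zero of `g` in `[0, T̲]` has positive derivative
and every zero in `[T̲, T̄]` has negative derivative, then the set
`Z = {t ∈ [0, T̄] : g(t) = 0 ∧ g'(t) < 0}` is nonempty, and its infimum `t*`
lies in `[T̲, T̄]` with `g(t*) = 0` and `g'(t*) < 0`. -/
theorem first_downward_crossing (Tl Tu : ℝ) (hTl : 0 ≤ Tl) (hT : Tl < Tu)
    (g g' : ℝ → ℝ)
    (hg : ∀ t ∈ Set.Icc 0 Tu, HasDerivAt g (g' t) t)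
    (h1 : 0 < g Tl) (h2 : g Tu < 0)
    (h3 : ∀ t ∈ Set.Icc 0 Tl, g t = 0 → 0 < g' t)
    (h4 : ∀ t ∈ Set.Icc Tl Tu, g t = 0 → g' t < 0) :
    {t ∈ Set.Icc 0 Tu | g t = 0 ∧ g' t < 0}.Nonempty ∧
    sInf {t ∈ Set.Icc 0 Tu | g t = 0 ∧ g' t < 0} ∈ Set.Icc Tl Tu ∧
    g (sInf {t ∈ Set.Icc 0 Tu | g t = 0 ∧ g' t < 0}) = 0 ∧
    g' (sInf {t ∈ Set.Icc 0 Tu | g t = 0 ∧ g' t < 0}) < 0 := by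
  have hIccsub : Set.Icc Tl Tu ⊆ Set.Icc 0 Tu := Set.Icc_subset_Icc hTl le_rfl
  have hcont : ContinuousOn g (Set.Icc 0 Tu) := fun t ht =>
    (hg t ht).continuousAt.continuousWithinAt
  have hcont' : ContinuousOn g (Set.Icc Tl Tu) := hcont.mono hIccsub
  -- the set equals the set of zeros in [Tl, Tu]
  have hset : {t ∈ Set.Icc 0 Tu | g t = 0 ∧ g' t < 0}
      = {t ∈ Set.Icc Tl Tu | g t = 0} := by
    ext t
    simp only [Set.mem_setOf_eq, Set.mem_Icc]
    constructor
    · rintro ⟨⟨ht0, htu⟩, hz, hd⟩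
      refine ⟨⟨?_, htu⟩, hz⟩
      by_contra hlt
      push_neg at hlt
      exact absurd (h3 t ⟨ht0, hlt.le⟩ hz) (not_lt.mpr hd.le)
    · rintro ⟨⟨htl, htu⟩, hz⟩
      exact ⟨⟨hTl.trans htl, htu⟩, hz, h4 t ⟨htl, htu⟩ hz⟩
  set S := {t ∈ Set.Icc Tl Tu | g t = 0} with hS
  -- nonempty by IVT
  have hne : S.Nonempty := by
    have h0 : (0 : ℝ) ∈ Set.Icc (g Tu) (g Tl) := ⟨h2.le, h1.le⟩
    obtain ⟨t, ht, hgt⟩ := intermediate_value_Icc' hT.le hcont' h0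
    exact ⟨t, ht, hgt⟩
  have hclosed : IsClosed S := by
    have : S = Set.Icc Tl Tu ∩ g ⁻¹' {0} := by
      ext t; simp [hS, Set.mem_setOf_eq, and_comm]
    rw [this]
    exact hcont'.preimage_isClosed_of_isClosed isClosed_Icc isClosed_singleton
  have hbdd : BddBelow S := ⟨Tl, fun t ht => ht.1.1⟩
  have hmem : sInf S ∈ S := hclosed.csInf_mem hne hbdd
  rw [hset]
  exact ⟨hne, hmem.1, hmem.2, h4 _ hmem.1 hmem.2⟩
end

section
/- Under the hybrid tube setting: for every x₀ ∈ R — that is, for every τ ∈ [0, T̄] and x₀ ∈ N(τ) such that either τ ∈ [0, T̲], or τ ∈ [T̲, T̄] and h(x₀) ≥ 0 — the time-to-impact T_I(x₀) = inf{t ≥ 0 : h(φ(t,x₀)) = 0 and ḣ(φ(t,x₀)) < 0} is finite, satisfies τ + T_I(x₀) ∈ [T̲, T̄], and the impact point x₋ = φ(T_I(x₀), x₀) satisfies h(x₋) = 0 and ḣ(x₋) < 0 (i.e., x₋ lies in the guard S). -/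
/-- **Every point of the invariant tube reaches the guard transversally (Theorem 1, impact step).**
In the hybrid tube setting, for every `τ ∈ [0, T̄]` and `x₀ ∈ N(τ)` witnessing membership
in `R`, the set of downward guard-crossing times is nonempty, its infimum `T_I(x₀)` satisfies
`τ + T_I(x₀) ∈ [T̲, T̄]`, and the impact point `φ(T_I(x₀), x₀)` lies in the guard
`S = {x : h(x) = 0, ḣ(x) < 0}`. -/
theorem tube_impact {n : ℕ}
    (f : (Fin n → ℝ) → (Fin n → ℝ))
    (φ : ℝ → (Fin n → ℝ) → (Fin n → ℝ))
    (hφ0 : ∀ x, φ 0 x = x)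
    (hφadd : ∀ x : Fin n → ℝ, ∀ s ≥ (0:ℝ), ∀ t ≥ (0:ℝ), φ (s + t) x = φ t (φ s x))
    (hφdiff : ∀ x : Fin n → ℝ, ∀ t ≥ (0:ℝ),
      HasDerivWithinAt (fun s => φ s x) (f (φ t x)) (Set.Ici 0) t)
    (h : (Fin n → ℝ) → ℝ) (hh : ContDiff ℝ 1 h)
    (hdot : (Fin n → ℝ) → ℝ) (hhdot : ∀ x, hdot x = fderiv ℝ h x (f x))
    (Tl Tu : ℝ) (hTl : 0 ≤ Tl) (hT : Tl < Tu)
    (N : ℝ → Set (Fin n → ℝ))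
    (htube : ∀ τ ∈ Set.Icc (0:ℝ) Tu, ∀ x₀ ∈ N τ, ∀ t ≥ (0:ℝ), τ + t ≤ Tu →
      φ t x₀ ∈ N (τ + t))
    (ha : ∀ x ∈ N Tl, 0 < h x)
    (hb : ∀ x ∈ N Tu, h x < 0)
    (hc : ∀ t ∈ Set.Icc (0:ℝ) Tl, ∀ x ∈ N t, h x = 0 → 0 < hdot x)
    (hd : ∀ t ∈ Set.Icc Tl Tu, ∀ x ∈ N t, h x = 0 → hdot x < 0) :
    ∀ τ ∈ Set.Icc (0:ℝ) Tu, ∀ x₀ ∈ N τ,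
      (τ ∈ Set.Icc 0 Tl ∨ (τ ∈ Set.Icc Tl Tu ∧ 0 ≤ h x₀)) →
      {t : ℝ | 0 ≤ t ∧ h (φ t x₀) = 0 ∧ hdot (φ t x₀) < 0}.Nonempty ∧
      τ + sInf {t : ℝ | 0 ≤ t ∧ h (φ t x₀) = 0 ∧ hdot (φ t x₀) < 0} ∈ Set.Icc Tl Tu ∧
      h (φ (sInf {t : ℝ | 0 ≤ t ∧ h (φ t x₀) = 0 ∧ hdot (φ t x₀) < 0}) x₀) = 0 ∧
      hdot (φ (sInf {t : ℝ | 0 ≤ t ∧ h (φ t x₀) = 0 ∧ hdot (φ t x₀) < 0}) x₀) < 0 := by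
  intro τ hτ x₀ hx₀ hR
  obtain ⟨hτ0, hτu⟩ := hτ
  set S : Set ℝ := {t : ℝ | 0 ≤ t ∧ h (φ t x₀) = 0 ∧ hdot (φ t x₀) < 0} with hSdef
  have hbdd : BddBelow S := ⟨0, fun t ht => ht.1⟩
  by_cases hdeg : Tl ≤ τ ∧ h x₀ = 0
  · obtain ⟨hTlτ, hx0⟩ := hdeg
    have hdot0 : hdot x₀ < 0 := hd τ ⟨hTlτ, hτu⟩ x₀ hx₀ hx0
    have h0S : (0:ℝ) ∈ S := ⟨le_refl 0, by rw [hφ0]; exact hx0, by rw [hφ0]; exact hdot0⟩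
    have hinf : sInf S = 0 :=
      le_antisymm (csInf_le hbdd h0S) (le_csInf ⟨0, h0S⟩ fun t ht => ht.1)
    refine ⟨⟨0, h0S⟩, ?_, ?_, ?_⟩ <;> rw [hinf]
    · simpa using And.intro hTlτ hτu
    · rw [hφ0]; exact hx0
    · rw [hφ0]; exact hdot0
  · have hτlt : τ < Tu := by
      rcases hR with h1 | h2
      · exact lt_of_le_of_lt h1.2 hT
      · rcases lt_or_eq_of_le hτu with h' | h'
        · exact h'
        · exact absurd (hb x₀ (h' ▸ hx₀)) (not_lt.2 h2.2)
    set t₁ := max (Tl - τ) 0 with ht₁def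
    set t₂ := Tu - τ with ht₂def
    have ht₁0 : 0 ≤ t₁ := le_max_right _ _
    have ht₁₂ : t₁ < t₂ := by
      rcases le_or_gt τ Tl with hcase | hcase
      · have he : t₁ = Tl - τ := max_eq_left (by linarith)
        rw [he]; simp only [ht₂def]; linarith
      · have he : t₁ = 0 := max_eq_right (by linarith)
        rw [he]; simp only [ht₂def]; linarith
    have hgc : ContinuousOn (fun t => h (φ t x₀)) (Set.Ici (0:ℝ)) := fun t ht =>
      hh.continuous.continuousAt.comp_continuousWithinAt (hφdiff x₀ t ht).continuousWithinAt
    have hgIcc : ContinuousOn (fun t => h (φ t x₀)) (Set.Icc t₁ t₂) :=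
      hgc.mono (fun t ht => le_trans ht₁0 ht.1)
    have hmem : ∀ t, 0 ≤ t → τ + t ≤ Tu → φ t x₀ ∈ N (τ + t) :=
      fun t ht htu => htube τ ⟨hτ0, hτu⟩ x₀ hx₀ t ht htu
    have hg1 : 0 < h (φ t₁ x₀) := by
      rcases le_or_gt τ Tl with hcase | hcase
      · have he : t₁ = Tl - τ := max_eq_left (by linarith)
        have hNl : φ t₁ x₀ ∈ N Tl := by
          rw [he]
          have := hmem (Tl - τ) (by linarith) (by linarith)
          rwa [show τ + (Tl - τ) = Tl by ring] at this
        exact ha _ hNl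
      · have he : t₁ = 0 := max_eq_right (by linarith)
        rw [he, hφ0]
        rcases hR with h1 | h2
        · linarith [h1.2]
        · refine lt_of_le_of_ne h2.2 fun hEq => hdeg ⟨le_of_lt hcase, hEq.symm⟩
    have hg2 : h (φ t₂ x₀) < 0 := by
      have hNu : φ t₂ x₀ ∈ N Tu := by
        have := hmem t₂ (by simp only [ht₂def]; linarith)
          (by rw [show τ + t₂ = Tu by rw [ht₂def]; ring])
        rwa [show τ + t₂ = Tu by rw [ht₂def]; ring] at this
      exact hb _ hNu
    set Z := Set.Icc t₁ t₂ ∩ (fun t => h (φ t x₀)) ⁻¹' {0} with hZdef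
    have hZne : Z.Nonempty := by
      have h0mem : (0:ℝ) ∈ Set.Icc (h (φ t₂ x₀)) (h (φ t₁ x₀)) := ⟨le_of_lt hg2, le_of_lt hg1⟩
      obtain ⟨s, hs, hgs⟩ := intermediate_value_Icc' (le_of_lt ht₁₂) hgIcc h0mem
      exact ⟨s, hs, hgs⟩
    have hZclosed : IsClosed Z :=
      hgIcc.preimage_isClosed_of_isClosed isClosed_Icc isClosed_singleton
    have hZcompact : IsCompact Z :=
      isCompact_Icc.of_isClosed_subset hZclosed Set.inter_subset_left
    have hs₀mem : sInf Z ∈ Z := hZcompact.sInf_mem hZne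
    set s₀ := sInf Z with hs₀def
    obtain ⟨⟨hs₀1, hs₀2⟩, hs₀g⟩ := hs₀mem
    have hs₀g' : h (φ s₀ x₀) = 0 := hs₀g
    have hs₀0 : 0 ≤ s₀ := le_trans ht₁0 hs₀1
    have hτs₀u : τ + s₀ ≤ Tu := by
      have : s₀ ≤ Tu - τ := hs₀2
      linarith
    have hτs₀l : Tl ≤ τ + s₀ := by
      have := le_trans (le_max_left (Tl - τ) 0) hs₀1
      linarith
    have hNs₀ : φ s₀ x₀ ∈ N (τ + s₀) := hmem s₀ hs₀0 hτs₀u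
    have hdots₀ : hdot (φ s₀ x₀) < 0 := hd (τ + s₀) ⟨hτs₀l, hτs₀u⟩ _ hNs₀ hs₀g'
    have hs₀S : s₀ ∈ S := ⟨hs₀0, hs₀g', hdots₀⟩
    have hlb : ∀ t ∈ S, s₀ ≤ t := by
      intro t ht
      by_contra hlt
      push_neg at hlt
      obtain ⟨ht0, htg, htd⟩ := ht
      rcases lt_or_ge t t₁ with hcase | hcase
      · have ht₁pos : 0 < t₁ := lt_of_le_of_lt ht0 hcase
        have hTlτ : 0 < Tl - τ := by
          by_contra hn; push_neg at hn
          rw [ht₁def, max_eq_right hn] at ht₁pos; exact lt_irrefl 0 ht₁pos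
        have he : t₁ = Tl - τ := max_eq_left (le_of_lt hTlτ)
        have hτt : τ + t ≤ Tl := by rw [he] at hcase; linarith
        have hN : φ t x₀ ∈ N (τ + t) := hmem t ht0 (by linarith)
        have := hc (τ + t) ⟨by linarith, hτt⟩ _ hN htg
        linarith
      · have htZ : t ∈ Z := ⟨⟨hcase, by linarith⟩, htg⟩
        exact absurd (csInf_le hZcompact.bddBelow htZ) (not_le.2 hlt)
    have hinf : sInf S = s₀ := le_antisymm (csInf_le hbdd hs₀S) (le_csInf ⟨s₀, hs₀S⟩ hlb)
    refine ⟨⟨s₀, hs₀S⟩, ?_, ?_, ?_⟩ <;> rw [hinf]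
    · exact ⟨hτs₀l, hτs₀u⟩
    · exact hs₀g'
    · exact hdots₀
end

section
/- Under the hybrid tube setting with N(0) = {x : ‖α₀(x − x*)‖₂ ≤ 1} for an invertible real n×n matrix α₀ and x* ∈ ℝ^n: let Δ : ℝ^n → ℝ^n and let γ ∈ ℝ satisfy ‖α₀(Δ(x) − x*)‖₂ ≤ γ for every t ∈ [T̲, T̄] and every x ∈ N(t) with h(x) = 0. Define the step-to-step map F(x₀) = Δ(φ(T_I(x₀), x₀)). Then for every x₀ ∈ R, ‖α₀(F(x₀) − x*)‖₂ ≤ γ. Moreover, if γ ≤ 1, then for every k ∈ ℕ the k-th iterate F^k(x₀) is well-defined (each iterate has finite time-to-impact) and lies in R; in particular F(R) ⊆ {x : ‖α₀(x − x*)‖₂ ≤ γ} ⊆ R. -/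
/-- Time to impact with the guard `S = {x : h x = 0 ∧ ḣ x < 0}` along the semiflow `φ`. -/
noncomputable def timeToImpact {n : ℕ} (φ : ℝ → (Fin n → ℝ) → (Fin n → ℝ))
    (h hdot : (Fin n → ℝ) → ℝ) (x : Fin n → ℝ) : ℝ :=
  sInf {t : ℝ | 0 ≤ t ∧ h (φ t x) = 0 ∧ hdot (φ t x) < 0}

/-- The step-to-step map `F(x) = Δ(φ(T_I(x), x))`. -/
noncomputable def stepMap {n : ℕ} (φ : ℝ → (Fin n → ℝ) → (Fin n → ℝ))
    (h hdot : (Fin n → ℝ) → ℝ) (Δ : (Fin n → ℝ) → (Fin n → ℝ))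
    (x : Fin n → ℝ) : Fin n → ℝ :=
  Δ (φ (timeToImpact φ h hdot x) x)

lemma tube_key {n : ℕ}
    (φ : ℝ → (Fin n → ℝ) → (Fin n → ℝ))
    (hφ0 : ∀ x, φ 0 x = x)
    (hφcont : ∀ x : Fin n → ℝ, ContinuousOn (fun s => φ s x) (Set.Ici 0))
    (h hdot : (Fin n → ℝ) → ℝ) (hhc : Continuous h)
    (Tl Tu : ℝ) (hTl : 0 ≤ Tl) (hT : Tl < Tu)
    (N : ℝ → Set (Fin n → ℝ))
    (htube : ∀ τ ∈ Set.Icc (0:ℝ) Tu, ∀ x₀ ∈ N τ, ∀ t ≥ (0:ℝ), τ + t ≤ Tu →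
      φ t x₀ ∈ N (τ + t))
    (ha : ∀ x ∈ N Tl, 0 < h x)
    (hb : ∀ x ∈ N Tu, h x < 0)
    (hc : ∀ t ∈ Set.Icc (0:ℝ) Tl, ∀ x ∈ N t, h x = 0 → 0 < hdot x)
    (hd : ∀ t ∈ Set.Icc Tl Tu, ∀ x ∈ N t, h x = 0 → hdot x < 0)
    (x₀ : Fin n → ℝ)
    (hx₀ : x₀ ∈ (⋃ t ∈ Set.Icc (0:ℝ) Tl, N t) ∪
      (⋃ t ∈ Set.Icc Tl Tu, N t ∩ {x : Fin n → ℝ | 0 ≤ h x})) :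
    {t : ℝ | 0 ≤ t ∧ h (φ t x₀) = 0 ∧ hdot (φ t x₀) < 0}.Nonempty ∧
    ∃ τ' ∈ Set.Icc Tl Tu, φ (timeToImpact φ h hdot x₀) x₀ ∈ N τ' ∧
      h (φ (timeToImpact φ h hdot x₀) x₀) = 0 := by
  -- Extract a starting datum
  obtain ⟨τ, hτ0, hτu, hτN, a, ha0, haTl, haTu, hga, hearly⟩ :
      ∃ τ, 0 ≤ τ ∧ τ < Tu ∧ x₀ ∈ N τ ∧ ∃ a, 0 ≤ a ∧ Tl - τ ≤ a ∧ a ≤ Tu - τ ∧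
        0 ≤ h (φ a x₀) ∧
        (∀ t, 0 ≤ t → t < a → h (φ t x₀) = 0 → 0 < hdot (φ t x₀)) := by
    rcases hx₀ with hx | hx
    · simp only [Set.mem_iUnion] at hx
      obtain ⟨τ, hτ, hxN⟩ := hx
      refine ⟨τ, hτ.1, lt_of_le_of_lt hτ.2 hT, hxN, Tl - τ, by linarith [hτ.2], le_refl _,
        by linarith [hT.le], ?_, ?_⟩
      · have := htube τ ⟨hτ.1, by linarith [hτ.2, hT.le]⟩ x₀ hxN (Tl - τ)
          (by linarith [hτ.2]) (by linarith [hT.le])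
        rw [show τ + (Tl - τ) = Tl by ring] at this
        exact (ha _ this).le
      · intro t ht0 hta hzero
        have hmem := htube τ ⟨hτ.1, by linarith [hτ.2, hT.le]⟩ x₀ hxN t ht0
          (by linarith)
        exact hc (τ + t) ⟨by linarith [hτ.1], by linarith⟩ _ hmem hzero
    · simp only [Set.mem_iUnion] at hx
      obtain ⟨τ, hτ, hxN, hxh⟩ := hx
      have hτu : τ < Tu := by
        rcases lt_or_eq_of_le hτ.2 with hlt | heq
        · exact hlt
        · exfalso; subst heq; exact absurd (hb _ hxN) (not_lt.mpr hxh)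
      refine ⟨τ, le_trans hTl hτ.1, hτu, hxN, 0, le_refl _, by linarith [hτ.1],
        by linarith, ?_, ?_⟩
      · rw [hφ0]; exact hxh
      · intro t ht0 hta; linarith
  -- the function along the flow
  set g : ℝ → ℝ := fun t => h (φ t x₀) with hg
  have gcont : ContinuousOn g (Set.Ici 0) := hhc.comp_continuousOn (hφcont x₀)
  -- the set Z
  set Z : Set ℝ := {t | t ∈ Set.Icc a (Tu - τ) ∧ g t ≤ 0} with hZ
  have hsub : Set.Icc a (Tu - τ) ⊆ Set.Ici (0:ℝ) := fun t ht => le_trans ha0 ht.1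
  have hZclosed : IsClosed Z := by
    have : Z = Set.Icc a (Tu - τ) ∩ g ⁻¹' (Set.Iic 0) := rfl
    rw [this]
    exact (gcont.mono hsub).preimage_isClosed_of_isClosed isClosed_Icc isClosed_Iic
  have hZne : Z.Nonempty := by
    refine ⟨Tu - τ, ⟨haTu, le_refl _⟩, ?_⟩
    have := htube τ ⟨hτ0, hτu.le⟩ x₀ hτN (Tu - τ) (by linarith) (by linarith)
    rw [show τ + (Tu - τ) = Tu by ring] at this
    exact (hb _ this).le
  have hZbdd : BddBelow Z := ⟨a, fun t ht => ht.1.1⟩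
  set t₁ : ℝ := sInf Z with ht₁
  have ht₁Z : t₁ ∈ Z := hZclosed.csInf_mem hZne hZbdd
  have ht₁a : a ≤ t₁ := ht₁Z.1.1
  have ht₁u : t₁ ≤ Tu - τ := ht₁Z.1.2
  have ht₁0 : 0 ≤ t₁ := le_trans ha0 ht₁a
  -- g t₁ = 0
  have hgt₁ : g t₁ = 0 := by
    rcases lt_or_eq_of_le ht₁Z.2 with hlt | heq
    · exfalso
      have hat₁ : a < t₁ := lt_of_le_of_ne ht₁a (fun heq2 => by rw [← heq2] at hlt; linarith)
      have hivt := intermediate_value_Icc' hat₁.le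
        (gcont.mono (fun s hs => le_trans ha0 hs.1))
      have h0mem : (0:ℝ) ∈ Set.Icc (g t₁) (g a) := ⟨hlt.le, hga⟩
      obtain ⟨c, hc1, hc2⟩ := hivt h0mem
      have hcZ : c ∈ Z := ⟨⟨hc1.1, le_trans hc1.2 ht₁u⟩, hc2.le⟩
      have : t₁ ≤ c := csInf_le hZbdd hcZ
      have hct : c = t₁ := le_antisymm hc1.2 this
      rw [hct] at hc2; linarith
    · exact heq
  -- membership of φ t₁ x₀
  have hmem : φ t₁ x₀ ∈ N (τ + t₁) :=
    htube τ ⟨hτ0, hτu.le⟩ x₀ hτN t₁ ht₁0 (by linarith)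
  have hτt₁ : τ + t₁ ∈ Set.Icc Tl Tu := ⟨by linarith, by linarith⟩
  have hdneg : hdot (φ t₁ x₀) < 0 := hd _ hτt₁ _ hmem hgt₁
  have ht₁S : t₁ ∈ {t : ℝ | 0 ≤ t ∧ h (φ t x₀) = 0 ∧ hdot (φ t x₀) < 0} :=
    ⟨ht₁0, hgt₁, hdneg⟩
  have hne : {t : ℝ | 0 ≤ t ∧ h (φ t x₀) = 0 ∧ hdot (φ t x₀) < 0}.Nonempty := ⟨t₁, ht₁S⟩
  -- t₁ is a lower bound of the impact set
  have hlb : ∀ s ∈ {t : ℝ | 0 ≤ t ∧ h (φ t x₀) = 0 ∧ hdot (φ t x₀) < 0}, t₁ ≤ s := by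
    intro s hs
    by_contra hlt
    push_neg at hlt
    rcases lt_or_ge s a with hsa | has
    · exact absurd (hearly s hs.1 hsa hs.2.1) (not_lt.mpr hs.2.2.le)
    · have hsZ : s ∈ Z := ⟨⟨has, by linarith⟩, le_of_eq hs.2.1⟩
      exact absurd (csInf_le hZbdd hsZ) (not_le.mpr hlt)
  have hTI : timeToImpact φ h hdot x₀ = t₁ := by
    unfold timeToImpact
    exact le_antisymm (csInf_le ⟨0, fun s hs => hs.1⟩ ht₁S) (le_csInf hne hlb)
  refine ⟨hne, τ + t₁, hτt₁, ?_, ?_⟩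
  · rw [hTI]; exact hmem
  · rw [hTI]; exact hgt₁

/-- **Forward invariance of the hybrid tube (Theorem 1, reset step).**
If every guard intersection of the tube resets within distance `γ` of `x*` in the
`α₀`-norm, then `‖α₀(F(x₀) − x*)‖₂ ≤ γ` on `R`; if moreover `γ ≤ 1`, every iterate of the
step-to-step map is well-defined (has a downward guard crossing) and stays in `R`, and
`F(R) ⊆ {x : ‖α₀(x − x*)‖₂ ≤ γ} ⊆ R`. -/
theorem tube_forward_invariance {n : ℕ}
    (f : (Fin n → ℝ) → (Fin n → ℝ))
    (φ : ℝ → (Fin n → ℝ) → (Fin n → ℝ))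
    (hφ0 : ∀ x, φ 0 x = x)
    (hφadd : ∀ x : Fin n → ℝ, ∀ s ≥ (0:ℝ), ∀ t ≥ (0:ℝ), φ (s + t) x = φ t (φ s x))
    (hφdiff : ∀ x : Fin n → ℝ, ∀ t ≥ (0:ℝ),
      HasDerivWithinAt (fun s => φ s x) (f (φ t x)) (Set.Ici 0) t)
    (h : (Fin n → ℝ) → ℝ) (hh : ContDiff ℝ 1 h)
    (hdot : (Fin n → ℝ) → ℝ) (hhdot : ∀ x, hdot x = fderiv ℝ h x (f x))
    (Tl Tu : ℝ) (hTl : 0 ≤ Tl) (hT : Tl < Tu)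
    (N : ℝ → Set (Fin n → ℝ))
    (htube : ∀ τ ∈ Set.Icc (0:ℝ) Tu, ∀ x₀ ∈ N τ, ∀ t ≥ (0:ℝ), τ + t ≤ Tu →
      φ t x₀ ∈ N (τ + t))
    (ha : ∀ x ∈ N Tl, 0 < h x)
    (hb : ∀ x ∈ N Tu, h x < 0)
    (hc : ∀ t ∈ Set.Icc (0:ℝ) Tl, ∀ x ∈ N t, h x = 0 → 0 < hdot x)
    (hd : ∀ t ∈ Set.Icc Tl Tu, ∀ x ∈ N t, h x = 0 → hdot x < 0)
    (α₀ : Matrix (Fin n) (Fin n) ℝ) (hα₀ : IsUnit α₀)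
    (xs : Fin n → ℝ)
    (hN0 : N 0 = {x : Fin n → ℝ | enorm2 (α₀.mulVec (x - xs)) ≤ 1})
    (Δ : (Fin n → ℝ) → (Fin n → ℝ))
    (γ : ℝ)
    (hγ : ∀ t ∈ Set.Icc Tl Tu, ∀ x ∈ N t, h x = 0 →
      enorm2 (α₀.mulVec (Δ x - xs)) ≤ γ)
    (Rset : Set (Fin n → ℝ))
    (hRset : Rset = (⋃ t ∈ Set.Icc (0:ℝ) Tl, N t) ∪
      (⋃ t ∈ Set.Icc Tl Tu, N t ∩ {x : Fin n → ℝ | 0 ≤ h x})) :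
    (∀ x₀ ∈ Rset, enorm2 (α₀.mulVec (stepMap φ h hdot Δ x₀ - xs)) ≤ γ) ∧
    (γ ≤ 1 →
      (∀ x₀ ∈ Rset, ∀ k : ℕ,
        (stepMap φ h hdot Δ)^[k] x₀ ∈ Rset ∧
        {t : ℝ | 0 ≤ t ∧ h (φ t ((stepMap φ h hdot Δ)^[k] x₀)) = 0 ∧
          hdot (φ t ((stepMap φ h hdot Δ)^[k] x₀)) < 0}.Nonempty) ∧
      stepMap φ h hdot Δ '' Rset ⊆ {x : Fin n → ℝ | enorm2 (α₀.mulVec (x - xs)) ≤ γ} ∧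
      {x : Fin n → ℝ | enorm2 (α₀.mulVec (x - xs)) ≤ γ} ⊆ Rset) := by
  have hφcont : ∀ x : Fin n → ℝ, ContinuousOn (fun s => φ s x) (Set.Ici 0) :=
    fun x t ht => (hφdiff x t ht).continuousWithinAt
  have key : ∀ x₀ ∈ Rset,
      {t : ℝ | 0 ≤ t ∧ h (φ t x₀) = 0 ∧ hdot (φ t x₀) < 0}.Nonempty ∧
      ∃ τ' ∈ Set.Icc Tl Tu, φ (timeToImpact φ h hdot x₀) x₀ ∈ N τ' ∧
        h (φ (timeToImpact φ h hdot x₀) x₀) = 0 := by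
    intro x₀ hx
    exact tube_key φ hφ0 hφcont h hdot hh.continuous Tl Tu hTl hT N htube ha hb hc hd x₀
      (hRset ▸ hx)
  have bound : ∀ x₀ ∈ Rset, enorm2 (α₀.mulVec (stepMap φ h hdot Δ x₀ - xs)) ≤ γ := by
    intro x₀ hx
    obtain ⟨-, τ', hτ', hmem, hzero⟩ := key x₀ hx
    exact hγ τ' hτ' _ hmem hzero
  refine ⟨bound, fun hγ1 => ?_⟩
  have sub2 : {x : Fin n → ℝ | enorm2 (α₀.mulVec (x - xs)) ≤ γ} ⊆ Rset := by
    intro x hxm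
    rw [hRset]
    left
    refine Set.mem_biUnion (show (0:ℝ) ∈ Set.Icc (0:ℝ) Tl from ⟨le_refl _, hTl⟩) ?_
    rw [hN0]
    exact le_trans hxm hγ1
  refine ⟨?_, ?_, sub2⟩
  · intro x₀ hx k
    induction k with
    | zero =>
      simpa using ⟨hx, (key x₀ hx).1⟩
    | succ k ih =>
      rw [Function.iterate_succ_apply']
      have hmem : stepMap φ h hdot Δ ((stepMap φ h hdot Δ)^[k] x₀) ∈ Rset :=
        sub2 (bound _ ih.1)
      exact ⟨hmem, (key _ hmem).1⟩
  · rintro y ⟨x, hx, rfl⟩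
    exact bound x hx
end

section
/- Under the hybrid tube setting: for every τ ∈ [0, T̄] and x₀ ∈ N(τ) witnessing membership in R (either τ ∈ [0, T̲], or τ ∈ [T̲, T̄] and h(x₀) ≥ 0), and for every t ≥ 0 with t < T_I(x₀), the point φ(t, x₀) lies in R. In other words, trajectories starting in R remain in R throughout the continuous phase, up to the time of impact with the guard. -/
/-- **The tube is invariant along the continuous phase (Theorem 1, flow step).**
In the hybrid tube setting, any trajectory starting at a point `x₀ ∈ N(τ)` witnessing
membership in `R` remains in `R` for all times `0 ≤ t < T_I(x₀)` before impact. -/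
theorem tube_continuous_invariance {n : ℕ}
    (f : (Fin n → ℝ) → (Fin n → ℝ))
    (φ : ℝ → (Fin n → ℝ) → (Fin n → ℝ))
    (hφ0 : ∀ x, φ 0 x = x)
    (hφadd : ∀ x : Fin n → ℝ, ∀ s ≥ (0:ℝ), ∀ t ≥ (0:ℝ), φ (s + t) x = φ t (φ s x))
    (hφdiff : ∀ x : Fin n → ℝ, ∀ t ≥ (0:ℝ),
      HasDerivWithinAt (fun s => φ s x) (f (φ t x)) (Set.Ici 0) t)
    (h : (Fin n → ℝ) → ℝ) (hh : ContDiff ℝ 1 h)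
    (hdot : (Fin n → ℝ) → ℝ) (hhdot : ∀ x, hdot x = fderiv ℝ h x (f x))
    (Tl Tu : ℝ) (hTl : 0 ≤ Tl) (hT : Tl < Tu)
    (N : ℝ → Set (Fin n → ℝ))
    (htube : ∀ τ ∈ Set.Icc (0:ℝ) Tu, ∀ x₀ ∈ N τ, ∀ t ≥ (0:ℝ), τ + t ≤ Tu →
      φ t x₀ ∈ N (τ + t))
    (ha : ∀ x ∈ N Tl, 0 < h x)
    (hb : ∀ x ∈ N Tu, h x < 0)
    (hc : ∀ t ∈ Set.Icc (0:ℝ) Tl, ∀ x ∈ N t, h x = 0 → 0 < hdot x)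
    (hd : ∀ t ∈ Set.Icc Tl Tu, ∀ x ∈ N t, h x = 0 → hdot x < 0)
    (Rset : Set (Fin n → ℝ))
    (hRset : Rset = (⋃ t ∈ Set.Icc (0:ℝ) Tl, N t) ∪
      (⋃ t ∈ Set.Icc Tl Tu, N t ∩ {x : Fin n → ℝ | 0 ≤ h x})) :
    ∀ τ ∈ Set.Icc (0:ℝ) Tu, ∀ x₀ ∈ N τ,
      (τ ∈ Set.Icc 0 Tl ∨ (τ ∈ Set.Icc Tl Tu ∧ 0 ≤ h x₀)) →
      ∀ t : ℝ, 0 ≤ t → t < timeToImpact φ h hdot x₀ →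
        φ t x₀ ∈ Rset := by
  intro τ hτ x₀ hx₀ hwit t ht htTI
  have hTlu : Tl ≤ Tu := le_of_lt hT
  have hcont : ∀ a b : ℝ, 0 ≤ a → ContinuousOn (fun u => h (φ u x₀)) (Set.Icc a b) := by
    intro a b ha0 u hu
    have h1 : ContinuousWithinAt (fun v => φ v x₀) (Set.Ici 0) u :=
      (hφdiff x₀ u (le_trans ha0 hu.1)).continuousWithinAt
    exact hh.continuous.continuousAt.comp_continuousWithinAt
      (h1.mono (fun v hv => le_trans ha0 hv.1))
  have key : ∀ s : ℝ, 0 ≤ s → Tl ≤ τ + s → τ + s ≤ Tu →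
      s < timeToImpact φ h hdot x₀ → 0 ≤ h (φ s x₀) := by
    intro s hs hTls hsTu hsTI
    by_contra hneg
    push_neg at hneg
    obtain ⟨s₀, hs₀0, hs₀s, hg₀, hτs₀⟩ :
        ∃ s₀, 0 ≤ s₀ ∧ s₀ ≤ s ∧ 0 ≤ h (φ s₀ x₀) ∧ Tl ≤ τ + s₀ := by
      rcases hwit with h1 | ⟨h2, h3⟩
      · refine ⟨Tl - τ, by linarith [h1.2], by linarith, ?_, by linarith⟩
        have hm := htube τ hτ x₀ hx₀ (Tl - τ) (by linarith [h1.2]) (by linarith)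
        rw [show τ + (Tl - τ) = Tl by ring] at hm
        exact le_of_lt (ha _ hm)
      · exact ⟨0, le_refl 0, hs, by rw [hφ0]; exact h3, by linarith [h2.1]⟩
    have hCont := hcont s₀ s hs₀0
    have h0mem : (0:ℝ) ∈ Set.Icc (h (φ s x₀)) (h (φ s₀ x₀)) := ⟨le_of_lt hneg, hg₀⟩
    obtain ⟨u, hu, hgu⟩ := intermediate_value_Icc' hs₀s hCont h0mem
    have hu0 : 0 ≤ u := le_trans hs₀0 hu.1
    have hN : φ u x₀ ∈ N (τ + u) := htube τ hτ x₀ hx₀ u hu0 (by linarith [hu.2])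
    have hdotneg : hdot (φ u x₀) < 0 :=
      hd (τ + u) ⟨by linarith [hu.1], by linarith [hu.2]⟩ _ hN hgu
    have hmem : u ∈ {t : ℝ | 0 ≤ t ∧ h (φ t x₀) = 0 ∧ hdot (φ t x₀) < 0} :=
      ⟨hu0, hgu, hdotneg⟩
    have hle : timeToImpact φ h hdot x₀ ≤ u :=
      csInf_le ⟨0, fun v hv => hv.1⟩ hmem
    linarith [hu.2]
  rcases le_or_gt (τ + t) Tl with hcase | hcase
  · have hN : φ t x₀ ∈ N (τ + t) := htube τ hτ x₀ hx₀ t ht (by linarith)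
    rw [hRset]
    left
    exact Set.mem_biUnion ⟨by linarith [hτ.1], hcase⟩ hN
  · rcases le_or_gt (τ + t) Tu with hcase2 | hcase2
    · have hN : φ t x₀ ∈ N (τ + t) := htube τ hτ x₀ hx₀ t ht hcase2
      have hh0 := key t ht (le_of_lt hcase) hcase2 htTI
      rw [hRset]
      right
      exact Set.mem_biUnion ⟨le_of_lt hcase, hcase2⟩ ⟨hN, hh0⟩
    · exfalso
      set t' := Tu - τ with ht'
      have ht'0 : 0 ≤ t' := by linarith [hτ.2]
      have ht't : t' < t := by linarith
      have hkey := key t' ht'0 (by linarith) (by linarith) (lt_trans ht't htTI)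
      have hN : φ t' x₀ ∈ N Tu := by
        have hm := htube τ hτ x₀ hx₀ t' ht'0 (by linarith)
        rw [show τ + t' = Tu by rw [ht']; ring] at hm
        exact hm
      linarith [hb _ hN]
end

section
/- Let g : ℝ^n → ℝ^m be continuously differentiable, let a, b ∈ ℝ^n with a ≤ b componentwise, let X = {x ∈ ℝ^n : a_k ≤ x_k ≤ b_k for all k}, and let x̊ ∈ X. Let l, u ∈ ℝ^{m×n} satisfy the mixed-Jacobian bounds: for all indices i, j, and for every point p ∈ ℝ^n with a_k ≤ p_k ≤ b_k for all k ≤ j and p_k = x̊_k for all k > j, one has l_{ij} ≤ ∂g_i/∂x_j(p) ≤ u_{ij}. Then for every x ∈ X there exists a matrix M ∈ ℝ^{m×n} with l_{ij} ≤ M_{ij} ≤ u_{ij} for all i, j, such that g(x) − g(x̊) = M(x − x̊). -/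
/-!
Walk from `x̊` to `x` changing one coordinate at a time: the `j`-th step only moves the
`j`-th coordinate and stays in the mixed set of index `j`, which is convex. By the mean value
theorem, the change of `gᵢ` along that step is `∂gᵢ/∂xⱼ(z) (xⱼ - x̊ⱼ)` for some `z` of the mixed
set, so `Mᵢⱼ := ∂gᵢ/∂xⱼ(z)` lies in `[lᵢⱼ, uᵢⱼ]`, and the steps telescope to `g(x) - g(x̊)`.
-/

open Matrix

def mixedPoint {n : ℕ} (x y : Fin n → ℝ) (j : ℕ) : Fin n → ℝ :=
  fun k => if (k : ℕ) < j then x k else y k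

def mixedBox {n : ℕ} (a b c : Fin n → ℝ) (j : Fin n) : Set (Fin n → ℝ) :=
  {p | (∀ k, k ≤ j → a k ≤ p k ∧ p k ≤ b k) ∧ ∀ k, j < k → p k = c k}

section MixedPoint

variable {n : ℕ} (x y : Fin n → ℝ)

@[simp]
lemma mixedPoint_zero : mixedPoint x y 0 = y := by
  funext k
  simp [mixedPoint]

@[simp]
lemma mixedPoint_top : mixedPoint x y n = x := by
  funext k
  simp [mixedPoint, k.isLt]

lemma mixedPoint_succ_apply_of_ne {j k : Fin n} (hkj : k ≠ j) :
    mixedPoint x y (j + 1) k = mixedPoint x y j k := by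
  have : (k : ℕ) < j + 1 ↔ (k : ℕ) < j := by
    have := Fin.val_ne_of_ne hkj
    omega
  simp only [mixedPoint, this]

lemma mixedPoint_succ_apply_self_sub (j : Fin n) :
    mixedPoint x y (j + 1) j - mixedPoint x y j j = x j - y j := by
  simp [mixedPoint]

lemma sub_eq_sum_mixedPoint (φ : (Fin n → ℝ) → ℝ) :
    φ x - φ y = ∑ j : Fin n, (φ (mixedPoint x y (j + 1)) - φ (mixedPoint x y j)) := by
  rw [Fin.sum_univ_eq_sum_range (fun j => φ (mixedPoint x y (j + 1)) - φ (mixedPoint x y j)),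
    Finset.sum_range_sub (fun j => φ (mixedPoint x y j)), mixedPoint_top, mixedPoint_zero]

end MixedPoint

section MixedBox

variable {n : ℕ} {a b c : Fin n → ℝ}

lemma convex_mixedBox (j : Fin n) : Convex ℝ (mixedBox a b c j) := by
  rintro p ⟨hp_box, hp_eq⟩ q ⟨hq_box, hq_eq⟩ s t hs ht hst
  refine ⟨fun k hk => convex_Icc (a k) (b k) (hp_box k hk) (hq_box k hk) hs ht hst,
    fun k hk => ?_⟩
  simp only [Pi.add_apply, Pi.smul_apply, smul_eq_mul, hp_eq k hk, hq_eq k hk]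
  rw [← add_mul, hst, one_mul]

variable {x : Fin n → ℝ}

lemma mixedPoint_mem_mixedBox (hx : ∀ k, a k ≤ x k ∧ x k ≤ b k)
    (hc : ∀ k, a k ≤ c k ∧ c k ≤ b k) (j : Fin n) : mixedPoint x c j ∈ mixedBox a b c j := by
  refine ⟨fun k _ => ?_, fun k hk => ?_⟩
  · unfold mixedPoint
    split_ifs
    exacts [hx k, hc k]
  · simp [mixedPoint, (Fin.lt_def.1 hk).not_gt]

lemma mixedPoint_succ_mem_mixedBox (hx : ∀ k, a k ≤ x k ∧ x k ≤ b k) (j : Fin n) :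
    mixedPoint x c (j + 1) ∈ mixedBox a b c j := by
  refine ⟨fun k hk => ?_, fun k hk => ?_⟩
  · simpa [mixedPoint, Nat.lt_succ_of_le (Fin.le_def.1 hk)] using hx k
  · simp [mixedPoint, not_le.2 hk]

end MixedBox

lemma exists_mem_segment_sub_eq_fderiv_single_mul {ι : Type*} [Fintype ι] [DecidableEq ι]
    {f : (ι → ℝ) → ℝ} {f' : (ι → ℝ) → StrongDual ℝ (ι → ℝ)}
    (hf : ∀ z, HasFDerivAt f (f' z) z) {p q : ι → ℝ} (j : ι) (hpq : ∀ k ≠ j, p k = q k) :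
    ∃ z ∈ segment ℝ p q, f q - f p = f' z (Pi.single j 1) * (q j - p j) := by
  obtain ⟨z, hz, hmvt⟩ :=
    domain_mvt (fun z _ => (hf z).hasFDerivWithinAt) convex_univ (Set.mem_univ p)
      (Set.mem_univ q)
  have hstep : q - p = (q j - p j) • Pi.single j 1 := by
    funext k
    by_cases hkj : k = j
    · subst hkj
      simp
    · simp [hkj, hpq k hkj]
  refine ⟨z, hz, ?_⟩
  rw [hmvt, hstep, map_smul, smul_eq_mul, mul_comm]

theorem mixed_jacobian_inclusion_general {n m : ℕ}
    (g : (Fin n → ℝ) → (Fin m → ℝ)) (hg : ContDiff ℝ 1 g)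
    (a b : Fin n → ℝ)
    (xc : Fin n → ℝ) (hxc : ∀ k, a k ≤ xc k ∧ xc k ≤ b k)
    (l u : Matrix (Fin m) (Fin n) ℝ)
    (hlu : ∀ (i : Fin m) (j : Fin n), ∀ p : Fin n → ℝ,
      (∀ k, k ≤ j → a k ≤ p k ∧ p k ≤ b k) →
      (∀ k, j < k → p k = xc k) →
      l i j ≤ fderiv ℝ g p (Pi.single j 1) i ∧
        fderiv ℝ g p (Pi.single j 1) i ≤ u i j) :
    ∀ x : Fin n → ℝ, (∀ k, a k ≤ x k ∧ x k ≤ b k) →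
      ∃ M : Matrix (Fin m) (Fin n) ℝ,
        (∀ i j, l i j ≤ M i j ∧ M i j ≤ u i j) ∧
        g x - g xc = M.mulVec (x - xc) := by
  intro x hx
  have hg' (i : Fin m) (z : Fin n → ℝ) :
      HasFDerivAt (fun p => g p i) ((ContinuousLinearMap.proj i).comp (fderiv ℝ g z)) z :=
    hasFDerivAt_pi'.1 ((hg.differentiable one_ne_zero) z).hasFDerivAt i
  have hstep (i : Fin m) (j : Fin n) : ∃ c, (l i j ≤ c ∧ c ≤ u i j) ∧
      g (mixedPoint x xc (j + 1)) i - g (mixedPoint x xc j) i = c * (x j - xc j) := by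
    obtain ⟨z, hz, hmvt⟩ := exists_mem_segment_sub_eq_fderiv_single_mul (hg' i) j
      (fun k hkj => (mixedPoint_succ_apply_of_ne x xc hkj).symm)
    have hz_box : z ∈ mixedBox a b xc j :=
      (convex_mixedBox j).segment_subset (mixedPoint_mem_mixedBox hx hxc j)
        (mixedPoint_succ_mem_mixedBox hx j) hz
    rw [mixedPoint_succ_apply_self_sub] at hmvt
    exact ⟨_, hlu i j z hz_box.1 hz_box.2, hmvt⟩
  choose M hM hM_step using hstep
  refine ⟨M, hM, funext fun i => ?_⟩
  simp only [Pi.sub_apply, mulVec, dotProduct]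
  rw [sub_eq_sum_mixedPoint x xc (fun p => g p i)]
  exact Finset.sum_congr rfl fun j _ => hM_step i j

/-- **Mixed Jacobian linear inclusion on a box.**
If the interval matrix `[l, u]` bounds the partial derivatives `∂gᵢ/∂xⱼ` on the mixed
sets (box in the first `j` coordinates, centering point `x̊` in the remaining ones),
then for every `x` in the box there is a matrix `M ∈ [l, u]` with
`g(x) − g(x̊) = M(x − x̊)`. -/
theorem mixed_jacobian_inclusion {n m : ℕ}
    (g : (Fin n → ℝ) → (Fin m → ℝ)) (hg : ContDiff ℝ 1 g)
    (a b : Fin n → ℝ) (hab : ∀ k, a k ≤ b k)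
    (xc : Fin n → ℝ) (hxc : ∀ k, a k ≤ xc k ∧ xc k ≤ b k)
    (l u : Matrix (Fin m) (Fin n) ℝ)
    (hlu : ∀ (i : Fin m) (j : Fin n), ∀ p : Fin n → ℝ,
      (∀ k, k ≤ j → a k ≤ p k ∧ p k ≤ b k) →
      (∀ k, j < k → p k = xc k) →
      l i j ≤ fderiv ℝ g p (Pi.single j 1) i ∧
        fderiv ℝ g p (Pi.single j 1) i ≤ u i j) :
    ∀ x : Fin n → ℝ, (∀ k, a k ≤ x k ∧ x k ≤ b k) →
      ∃ M : Matrix (Fin m) (Fin n) ℝ,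
        (∀ i j, l i j ≤ M i j ∧ M i j ≤ u i j) ∧
        g x - g xc = M.mulVec (x - xc) :=
  mixed_jacobian_inclusion_general g hg a b xc hxc l u hlu
end

section
/- Let A be a real n×n matrix, b > 0 a real number, and suppose every eigenvalue λ ∈ ℂ of A (viewed as a complex matrix) satisfies |λ| < b. Then there exists a real symmetric positive definite matrix P with P − I positive semidefinite such that b²P − AᵀPA is positive semidefinite. -/
/-! By Gelfand's formula some power satisfies `‖Aᴺ‖ < bᴺ`. For `B = b⁻¹ • A` the truncated sum
`P = ∑_{k<N} (Bᵏ)ᵀ Bᵏ` telescopes to `P - BᵀPB = 1 - (Bᴺ)ᵀBᴺ`, which is positive semidefinite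
because `‖Bᴺ‖ ≤ 1`; and `P ⪰ 1` because its `k = 0` term is `1`. -/

open Matrix Filter Finset
open scoped ComplexOrder NNReal Matrix.Norms.Frobenius

theorem spectrum.spectralRadius_lt_of_forall_nnnorm_lt {A : Type*} [NormedRing A]
    [NormedAlgebra ℂ A] [CompleteSpace A] (a : A) {r : ℝ≥0} (hr : 0 < r)
    (h : ∀ z ∈ spectrum ℂ a, ‖z‖₊ < r) : spectralRadius ℂ a < r := by
  rcases subsingleton_or_nontrivial A with _ | _
  · simpa using hr
  · exact spectrum.spectralRadius_lt_of_forall_lt a h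

theorem spectrum.eventually_nnnorm_pow_lt_pow {A : Type*} [NormedRing A]
    [NormedAlgebra ℂ A] [CompleteSpace A] {a : A} {r : ℝ≥0} (h : spectralRadius ℂ a < r) :
    ∀ᶠ N in atTop, ‖a ^ N‖₊ < r ^ N := by
  filter_upwards [(pow_nnnorm_pow_one_div_tendsto_nhds_spectralRadius a).eventually_lt_const h,
    eventually_gt_atTop 0] with N hN hN0
  have hpow := (ENNReal.pow_lt_pow_left_iff hN0.ne').mpr hN
  rw [← ENNReal.rpow_natCast, ← ENNReal.rpow_mul, one_div_mul_cancel (by positivity),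
    ENNReal.rpow_one] at hpow
  exact_mod_cast hpow

variable {n : Type*} [Fintype n]

theorem Matrix.dotProduct_star_self_eq_norm_sq {𝕜 : Type*} [RCLike 𝕜] (v : n → 𝕜) :
    star v ⬝ᵥ v = (‖WithLp.toLp 2 v‖ ^ 2 : ℝ) := by
  rw [dotProduct_comm, ← EuclideanSpace.inner_toLp_toLp, inner_self_eq_norm_sq_to_K]
  push_cast
  rfl

theorem Matrix.norm_toLp_mulVec_le {m 𝕜 : Type*} [Fintype m] [RCLike 𝕜] (M : Matrix m n 𝕜)
    (x : n → 𝕜) : ‖WithLp.toLp 2 (M *ᵥ x)‖ ≤ ‖M‖ * ‖WithLp.toLp 2 x‖ := by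
  simpa only [← replicateCol_mulVec, frobenius_norm_replicateCol]
    using frobenius_norm_mul M (replicateCol Unit x)

variable [DecidableEq n]

theorem Matrix.posSemidef_one_sub_conjTranspose_mul_self_of_norm_le_one {m 𝕜 : Type*}
    [Fintype m] [RCLike 𝕜] {M : Matrix m n 𝕜} (hM : ‖M‖ ≤ 1) : (1 - Mᴴ * M).PosSemidef := by
  refine .of_dotProduct_mulVec_nonneg (isHermitian_one.sub (isHermitian_conjTranspose_mul_self M))
    fun x => ?_
  have hMx : ‖WithLp.toLp 2 (M *ᵥ x)‖ ≤ ‖WithLp.toLp 2 x‖ :=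
    (norm_toLp_mulVec_le M x).trans (mul_le_of_le_one_left (norm_nonneg _) hM)
  rw [sub_mulVec, one_mulVec, dotProduct_sub, ← mulVec_mulVec, dotProduct_mulVec,
    vecMul_conjTranspose, star_star, dotProduct_star_self_eq_norm_sq,
    dotProduct_star_self_eq_norm_sq, sub_nonneg]
  exact RCLike.ofReal_le_ofReal.mpr (by gcongr)

theorem Matrix.exists_pos_norm_pow_lt_pow_of_spectrum_map_ofReal {A : Matrix n n ℝ} {b : ℝ}
    (hb : 0 < b) (hspec : ∀ μ ∈ spectrum ℂ (A.map Complex.ofReal), ‖μ‖ < b) :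
    ∃ N, 0 < N ∧ ‖A ^ N‖ < b ^ N := by
  have hρ := spectrum.spectralRadius_lt_of_forall_nnnorm_lt (A.map Complex.ofReal)
    (r := ⟨b, hb.le⟩) hb hspec
  obtain ⟨N, hN, hN0⟩ :=
    ((spectrum.eventually_nnnorm_pow_lt_pow hρ).and (eventually_gt_atTop 0)).exists
  have hmap : A.map Complex.ofReal ^ N = (A ^ N).map Complex.ofReal :=
    (Matrix.map_pow A Complex.ofRealHom N).symm
  rw [hmap, ← NNReal.coe_lt_coe, coe_nnnorm, frobenius_norm_map_eq _ _ Complex.norm_real] at hN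
  exact ⟨N, hN0, mod_cast hN⟩

section Lyapunov

variable {R : Type*} [Ring R] [StarRing R]

def Matrix.lyapunovSum (B : Matrix n n R) (N : ℕ) : Matrix n n R :=
  ∑ k ∈ range N, (B ^ k)ᴴ * B ^ k

theorem Matrix.lyapunovSum_sub_conjTranspose_mul_lyapunovSum_mul (B : Matrix n n R) (N : ℕ) :
    lyapunovSum B N - Bᴴ * lyapunovSum B N * B = 1 - (B ^ N)ᴴ * B ^ N := by
  have hshift : Bᴴ * lyapunovSum B N * B = ∑ k ∈ range N, (B ^ (k + 1))ᴴ * B ^ (k + 1) := by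
    simp only [lyapunovSum, mul_sum, sum_mul, pow_succ, conjTranspose_mul, Matrix.mul_assoc]
  rw [hshift, lyapunovSum, sub_eq_sub_iff_add_eq_add, ← sum_range_succ, sum_range_succ', add_comm]
  simp

theorem Matrix.posSemidef_lyapunovSum_sub_one [PartialOrder R] [StarOrderedRing R]
    (B : Matrix n n R) {N : ℕ} (hN : 0 < N) : (lyapunovSum B N - 1).PosSemidef := by
  obtain ⟨N, rfl⟩ := Nat.exists_eq_add_of_lt hN
  rw [lyapunovSum, zero_add, sum_range_succ', pow_zero, conjTranspose_one, Matrix.one_mul,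
    add_sub_cancel_right]
  exact posSemidef_sum _ fun k _ => posSemidef_conjTranspose_mul_self _

end Lyapunov

/-- **Feasibility of the discrete-time Lyapunov SDP.**
If every (complex) eigenvalue of the real matrix `A` has modulus less than `b > 0`,
then there exists a real symmetric positive definite `P` with `P ⪰ I` and
`AᵀPA ⪯ b²P`. -/
theorem discrete_lyapunov_feasible {n : ℕ}
    (A : Matrix (Fin n) (Fin n) ℝ) (b : ℝ) (hb : 0 < b)
    (hspec : ∀ μ ∈ spectrum ℂ (A.map Complex.ofReal), ‖μ‖ < b) :
    ∃ P : Matrix (Fin n) (Fin n) ℝ,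
      P.IsSymm ∧ P.PosDef ∧ (P - 1).PosSemidef ∧
      (b ^ 2 • P - Aᵀ * P * A).PosSemidef := by
  obtain ⟨N, hN, hAN⟩ := exists_pos_norm_pow_lt_pow_of_spectrum_map_ofReal hb hspec
  set B := b⁻¹ • A
  have hBN : ‖B ^ N‖ ≤ 1 := by
    rw [smul_pow, norm_smul, norm_pow, norm_inv, Real.norm_of_nonneg hb.le, inv_pow]
    exact inv_mul_le_one_of_le₀ hAN.le (by positivity)
  set P := lyapunovSum B N
  have hP1 : (P - 1).PosSemidef := posSemidef_lyapunovSum_sub_one B hN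
  have hPD : P.PosDef := by simpa using PosDef.one.add_posSemidef hP1
  refine ⟨P, by simpa using hPD.isHermitian, hPD, hP1, ?_⟩
  have hA : A = b • B := by simp [B, smul_smul, hb.ne']
  have hlyap : b ^ 2 • P - Aᵀ * P * A = b ^ 2 • (1 - (B ^ N)ᴴ * B ^ N) := by
    rw [← lyapunovSum_sub_conjTranspose_mul_lyapunovSum_mul, hA]
    simp only [transpose_smul, Matrix.smul_mul, Matrix.mul_smul, smul_smul, smul_sub, sq,
      conjTranspose_eq_transpose_of_trivial, P]
  rw [hlyap]
  exact (posSemidef_one_sub_conjTranspose_mul_self_of_norm_le_one hBN).smul (sq_nonneg b)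
end
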